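/- Suppose the edge {u,v} is admissible. If e ∈ K is an edge with e ∉ {{u,v}, e₁′, e₂′} and e is paired with a triangle r in K, then ξ(e) is paired with ξ(r) in the contracted complex K' (with respect to the induced order and induced height). -/

import Mathlib

open Classical Finset

noncomputable section

variable {V : Type*} [Fintype V] [DecidableEq V]

/-- `K` is a finite abstract simplicial complex on the vertex set `V`. -/
def IsComplex (K : Finset (Finset V)) : Prop :=
  (∀ σ ∈ K, σ.Nonempty) ∧ ∀ σ ∈ K, ∀ τ : Finset V, τ ⊆ σ → τ.Nonempty → τ ∈ K

/-- `h` is a height function on `K`. -/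
def IsHeight (K : Finset (Finset V)) (h : Finset V → ℝ) : Prop :=
  ∀ σ ∈ K, ∀ τ ∈ K, σ ⊆ τ → h σ ≤ h τ

/-- The vertex map sending `v` to `u` and fixing all other vertices. -/
def cmap (u v : V) : V → V := fun x => if x = v then u else x

/-- The contraction `ξ` on simplices. -/
def xi (u v : V) (σ : Finset V) : Finset V := σ.image (cmap u v)

/-- The link of a simplex `σ` in `K`. -/
def lk (K : Finset (Finset V)) (σ : Finset V) : Finset (Finset V) :=
  K.filter fun τ => τ ∩ σ = ∅ ∧ τ ∪ σ ∈ K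

/-- The edge `{u,v}` satisfies the link condition. -/
def LinkCond (K : Finset (Finset V)) (u v : V) : Prop :=
  lk K {u, v} = lk K {u} ∩ lk K {v}

/-- `K` is a `2`-dimensional complex in which every simplex is the face of a triangle and
every edge is contained in exactly two triangles (the combinatorial consequences of the
underlying space being a closed `2`-manifold). -/
def ClosedTwoManifold (K : Finset (Finset V)) : Prop :=
  (∀ σ ∈ K, σ.card ≤ 3) ∧
  (∀ σ ∈ K, ∃ t ∈ K, t.card = 3 ∧ σ ⊆ t) ∧
  (∀ e ∈ K, e.card = 2 → ∃ s ∈ K, ∃ t ∈ K, s ≠ t ∧ s.card = 3 ∧ t.card = 3 ∧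
    e ⊆ s ∧ e ⊆ t ∧ ∀ r ∈ K, r.card = 3 → e ⊆ r → r = s ∨ r = t)

/-- `prec` is a linear order on `K` refining the height function, with ties broken by
dimension (lower dimensional simplices first). -/
def PrecOK (K : Finset (Finset V)) (h : Finset V → ℝ)
    (prec : Finset V → Finset V → Prop) : Prop :=
  (∀ σ, ¬ prec σ σ) ∧
  (∀ σ τ ρ, prec σ τ → prec τ ρ → prec σ ρ) ∧
  (∀ σ ∈ K, ∀ τ ∈ K, σ ≠ τ → prec σ τ ∨ prec τ σ) ∧
  (∀ σ ∈ K, ∀ τ ∈ K, h σ < h τ → prec σ τ) ∧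
  (∀ σ ∈ K, ∀ τ ∈ K, h σ = h τ → σ.card < τ.card → prec σ τ)

/-- The graph `G_{≺e}` on the vertices of `K` whose edges are the edges of `K` strictly
preceding `e` under `≺`. -/
def vertGraph (K : Finset (Finset V)) (prec : Finset V → Finset V → Prop)
    (e : Finset V) : SimpleGraph V where
  Adj x y := x ≠ y ∧ ({x, y} : Finset V) ∈ K ∧ prec {x, y} e
  symm := by
    constructor
    rintro x y ⟨hxy, hK, hp⟩
    exact ⟨hxy.symm, by rwa [Finset.pair_comm], by rwa [Finset.pair_comm]⟩
  loopless := by constructor; rintro x ⟨hx, -⟩; exact hx rfl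

/-- The graph `G^{≻e}` on the triangles of `K`, two triangles being adjacent if they share
an edge strictly succeeding `e` under `≺`. -/
def triGraph (K : Finset (Finset V)) (prec : Finset V → Finset V → Prop)
    (e : Finset V) : SimpleGraph (Finset V) where
  Adj s t := s ≠ t ∧ s ∈ K ∧ t ∈ K ∧ s.card = 3 ∧ t.card = 3 ∧
    ∃ d : Finset V, d ∈ K ∧ d.card = 2 ∧ d ⊆ s ∧ d ⊆ t ∧ prec e d
  symm := by
    constructor
    rintro s t ⟨h1, h2, h3, h4, h5, d, hd1, hd2, hd3, hd4, hd5⟩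
    exact ⟨h1.symm, h3, h2, h5, h4, d, hd1, hd2, hd4, hd3, hd5⟩
  loopless := by constructor; rintro s ⟨hs, -⟩; exact hs rfl

/-- `w` is the `≺`-least vertex of the connected component of `x`. -/
def LeastVert (G : SimpleGraph V) (prec : Finset V → Finset V → Prop) (x w : V) : Prop :=
  G.Reachable x w ∧ ∀ w', G.Reachable x w' → w = w' ∨ prec {w} {w'}

/-- `w` is the `≺`-greatest triangle of the connected component of `s`. -/
def GreatestTri (G : SimpleGraph (Finset V)) (prec : Finset V → Finset V → Prop)
    (s w : Finset V) : Prop :=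
  G.Reachable s w ∧ ∀ w', G.Reachable s w' → w = w' ∨ prec w' w

/-- The edge `e = {x,y}` is paired with the vertex `w`: the endpoints `x` and `y` lie in
distinct connected components of `G_{≺e}` and `w` is the `≺`-greater of the two `≺`-least
vertices of those components. -/
def PairedVE (K : Finset (Finset V)) (prec : Finset V → Finset V → Prop)
    (w : V) (e : Finset V) : Prop :=
  ∃ x y wx wy, e = {x, y} ∧ x ≠ y ∧ e ∈ K ∧
    ¬ (vertGraph K prec e).Reachable x y ∧
    LeastVert (vertGraph K prec e) prec x wx ∧
    LeastVert (vertGraph K prec e) prec y wy ∧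
    ((prec {wx} {wy} ∧ w = wy) ∨ (prec {wy} {wx} ∧ w = wx))

/-- The edge `e`, contained in the two triangles `s` and `t`, is paired with the triangle
`w`: `s` and `t` lie in distinct connected components of `G^{≻e}` and `w` is the
`≺`-smaller of the two `≺`-greatest triangles of those components. -/
def PairedET (K : Finset (Finset V)) (prec : Finset V → Finset V → Prop)
    (e w : Finset V) : Prop :=
  ∃ s t ws wt : Finset V, s ≠ t ∧ s ∈ K ∧ t ∈ K ∧ s.card = 3 ∧ t.card = 3 ∧
    e ⊆ s ∧ e ⊆ t ∧ e ∈ K ∧ e.card = 2 ∧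
    ¬ (triGraph K prec e).Reachable s t ∧
    GreatestTri (triGraph K prec e) prec s ws ∧
    GreatestTri (triGraph K prec e) prec t wt ∧
    ((prec ws wt ∧ w = ws) ∨ (prec wt ws ∧ w = wt))

/-- `σ` is the `≺`-least `ξ`-preimage in `K` of `σ'`. -/
def MinPre (K : Finset (Finset V)) (u v : V) (prec : Finset V → Finset V → Prop)
    (σ' σ : Finset V) : Prop :=
  σ ∈ K ∧ xi u v σ = σ' ∧ ∀ ρ ∈ K, xi u v ρ = σ' → ρ = σ ∨ prec σ ρ

/-- The order induced on the contracted complex `K'`: `σ' ≺ τ'` iff the `≺`-least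
`ξ`-preimage of `σ'` precedes that of `τ'`. -/
def precInd (K : Finset (Finset V)) (u v : V) (prec : Finset V → Finset V → Prop)
    (σ' τ' : Finset V) : Prop :=
  ∃ σ τ : Finset V, MinPre K u v prec σ' σ ∧ MinPre K u v prec τ' τ ∧ prec σ τ


/-!
Call a triangle of `K` other than `t₁, t₂`, and an edge other than `{u,v}, e₁', e₂'`, *kept*.
By the link condition, `ξ` identifies two simplices only inside the fibres of `ξ{u,v}`,
`ξ t₁ = ξ e₁ = ξ e₁'` and `ξ t₂`; hence the kept simplices are exactly the `≺`-least preimages of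
the simplices of `K'`, and the induced order on them is `≺`. So an arc of `G'^{≻ξ(e)}` comes
from an arc of `G^{≻e}`, or from the two arcs through `t₁` (or `t₂`) across `e₁` and `e₁'`.
Conversely, replacing `t₁, t₂` by the other triangles `s₁, s₂` on `e₁', e₂'` carries the
components of `G^{≻e}` into those of `G'^{≻ξ(e)}`; the one arc lost, between `t₁` and `t₂`
across `{u,v}`, is not needed, because `{u,v}` is paired with a vertex and a parity argument on
the boundary of the component of `t₁` then connects `t₁` and `t₂` in `G^{≻{u,v}}` already.
Finally the greatest triangle of the component of a triangle on `e` is never `t₁`: otherwise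
`e ≺ e₁'`, and the pairing of `e₁'` with `t₁` puts a later triangle in the same component.
-/

section Contraction

variable {α : Type*} [DecidableEq α] {u v : α}

lemma mem_xi {x : α} {σ : Finset α} : x ∈ xi u v σ ↔ (x ∈ σ ∧ x ≠ v) ∨ (x = u ∧ v ∈ σ) := by
  simp only [xi, cmap, mem_image]
  grind

lemma xi_of_notMem {σ : Finset α} (h : v ∉ σ) : xi u v σ = σ := by
  ext x
  simp only [mem_xi]
  grind

lemma xi_of_mem (huv : u ≠ v) {σ : Finset α} (hu : u ∈ σ) (hv : v ∈ σ) :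
    xi u v σ = σ.erase v := by
  ext x
  simp only [mem_xi, mem_erase]
  grind

lemma notMem_xi (huv : u ≠ v) (σ : Finset α) : v ∉ xi u v σ := by
  simp [mem_xi, huv.symm]

lemma subset_insert_xi (σ : Finset α) : σ ⊆ insert v (xi u v σ) := by
  intro x hx
  by_cases hxv : x = v
  · exact hxv ▸ mem_insert_self _ _
  · exact mem_insert_of_mem (mem_xi.2 (Or.inl ⟨hx, hxv⟩))

lemma card_xi_le (σ : Finset α) : (xi u v σ).card ≤ σ.card := card_image_le

lemma card_xi {σ : Finset α} (h : ¬ (u ∈ σ ∧ v ∈ σ)) : (xi u v σ).card = σ.card := by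
  refine card_image_of_injOn fun x hx y hy hxy => ?_
  simp only [cmap] at hxy
  split_ifs at hxy <;> grind

lemma xi_insert_self (huv : u ≠ v) {σ : Finset α} (hu : u ∈ σ) (hv : v ∉ σ) :
    xi u v (insert v σ) = σ := by
  rw [xi_of_mem huv (mem_insert_of_mem hu) (mem_insert_self v σ), erase_insert hv]

lemma three_le_card_union {s t : Finset α} (hs : s.card = 2) (ht : t.card = 2) (hst : s ≠ t) :
    3 ≤ (s ∪ t).card := by
  have hinter : (s ∩ t).card < 2 := by
    by_contra! h
    have hst' : s ∩ t = s := eq_of_subset_of_card_le inter_subset_left (hs ▸ h)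
    exact hst (eq_of_subset_of_card_le (hst' ▸ inter_subset_right) (by rw [hs, ht]))
  have := card_union_add_card_inter s t
  omega

end Contraction

section Link

variable {α : Type*} {K : Finset (Finset α)}

lemma IsComplex.mem_of_subset (hK : IsComplex K) {σ τ : Finset α} (hτ : τ ∈ K) (hστ : σ ⊆ τ)
    (hσ : σ.Nonempty) : σ ∈ K :=
  hK.2 τ hτ σ hστ hσ

variable [DecidableEq α] {u v : α}

lemma LinkCond.insert_insert_mem (hlink : LinkCond K u v) (hK : IsComplex K)
    (huv : {u, v} ∈ K) {w : Finset α} (hu : u ∉ w) (hv : v ∉ w)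
    (hwu : insert u w ∈ K) (hwv : insert v w ∈ K) : insert u (insert v w) ∈ K := by
  rcases w.eq_empty_or_nonempty with rfl | hw
  · exact huv
  have hwK : w ∈ K := hK.mem_of_subset hwu (subset_insert _ _) hw
  have hlk : w ∈ lk K {u} ∩ lk K {v} := by
    simp only [lk, mem_inter, mem_filter, ← insert_eq, union_comm w, disjoint_singleton_right,
      ← disjoint_iff_inter_eq_empty]
    exact ⟨⟨hwK, hu, hwu⟩, hwK, hv, hwv⟩
  rw [← hlink] at hlk
  simpa [lk, union_comm w, ← insert_eq, insert_comm] using (mem_filter.1 hlk).2.2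

lemma LinkCond.insert_xi_mem_of_mixed (hlink : LinkCond K u v) (hK : IsComplex K)
    (huv : {u, v} ∈ K) {ρ σ : Finset α} (hρ : ρ ∈ K) (hσ : σ ∈ K)
    (h : xi u v ρ = xi u v σ) (huρ : u ∉ ρ) (hvρ : v ∈ ρ) (hvσ : v ∉ σ) :
    insert v (xi u v ρ) ∈ K := by
  have hmem := fun x => (Finset.ext_iff.1 h x)
  simp only [mem_xi] at hmem
  have huσ : u ∈ σ := by grind
  have hσu : insert u (σ.erase u) = σ := insert_erase huσ
  have hρv : insert v (σ.erase u) = ρ := by ext x; simp only [mem_insert, mem_erase]; grind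
  convert hlink.insert_insert_mem hK huv (notMem_erase u σ) (by simp [hvσ])
    (by rwa [hσu]) (by rwa [hρv]) using 1
  ext x; simp only [mem_insert, mem_erase, mem_xi]; grind

lemma LinkCond.insert_xi_mem (hlink : LinkCond K u v) (hK : IsComplex K) (huv : {u, v} ∈ K)
    (hne : u ≠ v) {ρ σ : Finset α} (hρ : ρ ∈ K) (hσ : σ ∈ K) (h : xi u v ρ = xi u v σ)
    (hρσ : ρ ≠ σ) : insert v (xi u v ρ) ∈ K := by
  have hmem := fun x => (Finset.ext_iff.1 h x)
  simp only [mem_xi] at hmem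
  by_cases hρ2 : u ∈ ρ ∧ v ∈ ρ
  · rwa [xi_of_mem hne hρ2.1 hρ2.2, insert_erase hρ2.2]
  by_cases hσ2 : u ∈ σ ∧ v ∈ σ
  · rwa [h, xi_of_mem hne hσ2.1 hσ2.2, insert_erase hσ2.2]
  by_cases hvρ : v ∈ ρ <;> by_cases hvσ : v ∈ σ
  · exact absurd (by ext x; grind) hρσ
  · exact hlink.insert_xi_mem_of_mixed hK huv hρ hσ h (by grind) hvρ hvσ
  · exact h ▸ hlink.insert_xi_mem_of_mixed hK huv hσ hρ h.symm (by grind) hvσ hvρ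
  · exact absurd (by ext x; grind) hρσ

end Link

namespace SimpleGraph

variable {α β : Type*}

lemma Reachable.lift {G : SimpleGraph α} {H : SimpleGraph β} (f : α → β)
    (hf : ∀ x y, G.Adj x y → H.Reachable (f x) (f y)) {x y : α} (h : G.Reachable x y) :
    H.Reachable (f x) (f y) := by
  rw [reachable_iff_reflTransGen] at h ⊢
  exact Relation.ReflTransGen.lift' f
    (fun a b hab => (reachable_iff_reflTransGen _ _).1 (hf a b hab)) x y h

lemma Reachable.exists_adj {G : SimpleGraph α} {u v : α} (h : G.Reachable u v) (huv : u ≠ v) :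
    ∃ w, G.Adj u w := by
  obtain ⟨p⟩ := h
  cases p with
  | nil => exact absurd rfl huv
  | cons hadj _ => exact ⟨_, hadj⟩

/-- The component of `u` carries an odd-degree vertex other than `u`: the handshake lemma
applied to the subgraph spanned by that component. -/
lemma reachable_of_odd_degree [Fintype α] {G : SimpleGraph α} [DecidableRel G.Adj] {u v : α}
    (hu : Odd (G.degree u)) (hodd : ∀ x, Odd (G.degree x) → x = u ∨ x = v) :
    G.Reachable u v := by
  classical
  let H : SimpleGraph α :=
    { Adj := fun x y => G.Adj x y ∧ G.Reachable u x
      symm := ⟨fun x y ⟨hxy, hx⟩ => ⟨hxy.symm, hx.trans hxy.reachable⟩⟩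
      loopless := ⟨fun x h => G.loopless.irrefl x h.1⟩ }
  have hdeg : ∀ x, G.Reachable u x → H.degree x = G.degree x := fun x hx => by
    simp only [← card_neighborFinset_eq_degree]
    congr 1
    ext y
    simp [H, hx]
  obtain ⟨w, hwu, hw⟩ := H.exists_ne_odd_degree_of_exists_odd_degree u
    (by rwa [hdeg u (Reachable.refl u)])
  obtain ⟨y, -, huw⟩ := (H.degree_pos_iff_exists_adj w).1 hw.pos
  rw [hdeg w huw] at hw
  exact (hodd w hw).resolve_left hwu ▸ huw

end SimpleGraph

section Surface

variable {α : Type*} {K : Finset (Finset α)}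

lemma ClosedTwoManifold.exists_other_triangle (hman : ClosedTwoManifold K) {d τ : Finset α}
    (hd : d ∈ K) (hd2 : d.card = 2) (hτ : τ ∈ K) (hτ3 : τ.card = 3) (hdτ : d ⊆ τ) :
    ∃ σ ∈ K, σ.card = 3 ∧ d ⊆ σ ∧ σ ≠ τ ∧ ∀ ρ ∈ K, ρ.card = 3 → d ⊆ ρ → ρ = τ ∨ ρ = σ := by
  obtain ⟨s, hs, t, ht, hst, hs3, ht3, hds, hdt, huniq⟩ := hman.2.2 d hd hd2
  rcases huniq τ hτ hτ3 hdτ with rfl | rfl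
  · exact ⟨t, ht, ht3, hdt, hst.symm, huniq⟩
  · exact ⟨s, hs, hs3, hds, hst, fun ρ hρ hρ3 hdρ => (huniq ρ hρ hρ3 hdρ).symm⟩

variable [DecidableEq α]

lemma card_two_mem_iff {x : α} {d : Finset α} :
    d.card = 2 ∧ x ∈ d ↔ ∃ y, y ≠ x ∧ d = {x, y} := by
  constructor
  · rintro ⟨hd2, hxd⟩
    obtain ⟨p, q, hpq, rfl⟩ := card_eq_two.1 hd2
    simp only [mem_insert, mem_singleton] at hxd
    rcases hxd with rfl | rfl
    exacts [⟨q, hpq.symm, rfl⟩, ⟨p, hpq, pair_comm _ _⟩]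
  · rintro ⟨y, hyx, rfl⟩
    exact ⟨card_pair hyx.symm, mem_insert_self _ _⟩

lemma card_image_pair {x : α} {s : Finset α} (hx : x ∉ s) :
    #(s.image fun y => ({x, y} : Finset α)) = #s := by
  refine card_image_of_injOn fun y _ z hz hyz => ?_
  rw [mem_coe] at hz
  have : z ∈ ({x, y} : Finset α) := by rw [show ({x, y} : Finset α) = {x, z} from hyz]; simp
  simp only [mem_insert, mem_singleton] at this
  exact (this.resolve_left fun h => hx (h ▸ hz)).symm

lemma ClosedTwoManifold.card_filter_subset_le_two (hman : ClosedTwoManifold K)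
    {S : Finset (Finset α)} (hS : ∀ τ ∈ S, τ ∈ K ∧ τ.card = 3) {d : Finset α} (hd : d ∈ K)
    (hd2 : d.card = 2) : #{τ ∈ S | d ⊆ τ} ≤ 2 := by
  obtain ⟨s, -, t, -, -, -, -, -, -, huniq⟩ := hman.2.2 d hd hd2
  calc #{τ ∈ S | d ⊆ τ} ≤ #{s, t} := card_le_card fun τ hτ => by
        obtain ⟨hτS, hdτ⟩ := mem_filter.1 hτ
        rcases huniq τ (hS τ hτS).1 (hS τ hτS).2 hdτ with rfl | rfl <;> simp
    _ ≤ 2 := card_le_two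

lemma IsComplex.even_card_edges_subset (hK : IsComplex K) {τ : Finset α} (hτ : τ ∈ K)
    (hτ3 : τ.card = 3) (x : α) : Even #{d ∈ {d ∈ K | d.card = 2 ∧ x ∈ d} | d ⊆ τ} := by
  by_cases hx : x ∈ τ
  · have himage : {d ∈ {d ∈ K | d.card = 2 ∧ x ∈ d} | d ⊆ τ} =
        (τ.erase x).image fun y => {x, y} := by
      ext d
      simp only [mem_filter, mem_image, mem_erase, and_assoc, card_two_mem_iff]
      constructor
      · rintro ⟨-, ⟨y, hyx, rfl⟩, hdτ⟩
        exact ⟨y, hyx, hdτ (by simp), rfl⟩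
      · rintro ⟨y, hyx, hy, rfl⟩
        have hsub : ({x, y} : Finset α) ⊆ τ := by simp [insert_subset_iff, hx, hy]
        exact ⟨hK.mem_of_subset hτ hsub (insert_nonempty _ _), ⟨y, hyx, rfl⟩, hsub⟩
    rw [himage, card_image_pair (notMem_erase x τ), card_erase_of_mem hx, hτ3]
    exact even_two
  · rw [filter_false_of_mem fun d hd hdτ => hx (hdτ (mem_filter.1 hd).2.2)]
    exact Even.zero

/-- `#{τ ∈ S | d ⊆ τ} = 1` says that `d` is a boundary edge of `S`. Double count the incidences
between `S` and the edges through `x`. -/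
lemma ClosedTwoManifold.even_card_boundary (hman : ClosedTwoManifold K) (hK : IsComplex K)
    {S : Finset (Finset α)} (hS : ∀ τ ∈ S, τ ∈ K ∧ τ.card = 3) (x : α) :
    Even #{d ∈ {d ∈ K | d.card = 2 ∧ x ∈ d} | #{τ ∈ S | d ⊆ τ} = 1} := by
  set D := {d ∈ K | d.card = 2 ∧ x ∈ d}
  have hsum : Even (∑ d ∈ D, #{τ ∈ S | d ⊆ τ}) := by
    have := sum_card_bipartiteAbove_eq_sum_card_bipartiteBelow (s := D) (t := S)
      (r := fun d τ => d ⊆ τ)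
    simp only [bipartiteAbove, bipartiteBelow] at this
    rw [this]
    exact Finset.even_sum _ fun τ hτ => hK.even_card_edges_subset (hS τ hτ).1 (hS τ hτ).2 x
  have hsplit : ∀ d ∈ D, #{τ ∈ S | d ⊆ τ} =
      (if #{τ ∈ S | d ⊆ τ} = 1 then 1 else 0) + 2 * (if #{τ ∈ S | d ⊆ τ} = 2 then 1 else 0) := by
    intro d hd
    have := hman.card_filter_subset_le_two hS (mem_filter.1 hd).1 (mem_filter.1 hd).2.1
    split_ifs <;> omega
  rw [sum_congr rfl hsplit, sum_add_distrib, sum_boole, ← mul_sum] at hsum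
  simpa [Nat.even_add] using hsum

/-- In the graph of the boundary edges of `S` other than `{u, v}`, the vertices `u` and `v` are
the only ones of odd degree. -/
lemma ClosedTwoManifold.reachable_of_boundary [Fintype α] (hman : ClosedTwoManifold K)
    (hK : IsComplex K) {S : Finset (Finset α)} (hS : ∀ τ ∈ S, τ ∈ K ∧ τ.card = 3) {u v : α}
    (huv : u ≠ v) (hb : #{τ ∈ S | {u, v} ⊆ τ} = 1) {G : SimpleGraph α}
    (hG : ∀ x y, x ≠ y → {x, y} ∈ K → {x, y} ≠ ({u, v} : Finset α) →
      #{τ ∈ S | {x, y} ⊆ τ} = 1 → G.Adj x y) :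
    G.Reachable u v := by
  let B (x : α) := {d ∈ {d ∈ K | d.card = 2 ∧ x ∈ d} | #{τ ∈ S | d ⊆ τ} = 1}
  let H : SimpleGraph α :=
    { Adj := fun x y => x ≠ y ∧ {x, y} ∈ K ∧ {x, y} ≠ ({u, v} : Finset α) ∧
        #{τ ∈ S | {x, y} ⊆ τ} = 1
      symm := ⟨fun x y ⟨hxy, h⟩ => by rw [pair_comm] at h; exact ⟨hxy.symm, h⟩⟩
      loopless := ⟨fun x h => h.1 rfl⟩ }
  have hdeg : ∀ x, H.degree x = #((B x).erase {u, v}) := by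
    intro x
    have himage : (B x).erase {u, v} = (H.neighborFinset x).image fun y => {x, y} := by
      ext d
      simp only [B, H, mem_erase, mem_filter, mem_image, SimpleGraph.mem_neighborFinset,
        and_assoc, card_two_mem_iff]
      constructor
      · rintro ⟨hne, hdK, ⟨y, hyx, rfl⟩, hd1⟩
        exact ⟨y, hyx.symm, hdK, hne, hd1, rfl⟩
      · rintro ⟨y, hxy, hdK, hne, hd1, rfl⟩
        exact ⟨hne, hdK, ⟨y, hxy.symm, rfl⟩, hd1⟩
    rw [himage, card_image_pair (by simp), SimpleGraph.card_neighborFinset_eq_degree]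
  have huvK : {u, v} ∈ K := by
    obtain ⟨τ, hτ⟩ := card_pos.1 (hb ▸ Nat.one_pos)
    obtain ⟨hτS, huvτ⟩ := mem_filter.1 hτ
    exact hK.mem_of_subset (hS τ hτS).1 huvτ (insert_nonempty _ _)
  have hmemB : ∀ x, x = u ∨ x = v → {u, v} ∈ B x := by
    rintro x hx
    simp only [B, mem_filter]
    exact ⟨⟨huvK, card_pair huv, by rcases hx with rfl | rfl <;> simp⟩, hb⟩
  refine (SimpleGraph.reachable_of_odd_degree (G := H) ?_ fun x hx => ?_).mono
    fun x y (hxy : H.Adj x y) => hG x y hxy.1 hxy.2.1 hxy.2.2.1 hxy.2.2.2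
  · obtain ⟨k, hk⟩ := hman.even_card_boundary hK hS u
    have := card_erase_of_mem (hmemB u (Or.inl rfl))
    refine ⟨k - 1, ?_⟩
    rw [hdeg, this]
    have := card_pos.2 ⟨_, hmemB u (Or.inl rfl)⟩
    simp only [B] at this ⊢
    omega
  · by_contra hxuv
    have hnot : {u, v} ∉ B x := fun h => hxuv (by simpa using (mem_filter.1 (mem_filter.1 h).1).2.2)
    rw [hdeg, erase_eq_of_notMem hnot] at hx
    exact Nat.not_odd_iff_even.2 (hman.even_card_boundary hK hS x) hx

end Surface

section Pairings

variable {α : Type*} {K : Finset (Finset α)} {prec : Finset α → Finset α → Prop}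

lemma PrecOK.prec_of_ssubset {h : Finset α → ℝ} (hprec : PrecOK K h prec) (hh : IsHeight K h)
    {σ τ : Finset α} (hσ : σ ∈ K) (hτ : τ ∈ K) (hστ : σ ⊂ τ) : prec σ τ :=
  (hh σ hσ τ hτ hστ.subset).lt_or_eq.elim (hprec.2.2.2.1 σ hσ τ hτ)
    fun heq => hprec.2.2.2.2 σ hσ τ hτ heq (card_lt_card hστ)

lemma triGraph.mem_of_reachable {e σ τ : Finset α} (h : (triGraph K prec e).Reachable σ τ)
    (hσ : σ ∈ K) (hσ3 : σ.card = 3) : τ ∈ K ∧ τ.card = 3 := by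
  rcases eq_or_ne τ σ with rfl | hne
  · exact ⟨hσ, hσ3⟩
  · obtain ⟨_, hadj⟩ := h.symm.exists_adj hne
    exact ⟨hadj.2.1, hadj.2.2.2.1⟩

lemma triGraph.mono {e e' : Finset α} (htrans : ∀ σ τ ρ, prec σ τ → prec τ ρ → prec σ ρ)
    (hee' : prec e e') : triGraph K prec e' ≤ triGraph K prec e :=
  fun _ _ ⟨hne, hs, ht, hs3, ht3, d, hd, hd2, hds, hdt, hpd⟩ =>
    ⟨hne, hs, ht, hs3, ht3, d, hd, hd2, hds, hdt, htrans _ _ _ hee' hpd⟩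

lemma PairedET.exists_prec (hman : ClosedTwoManifold K) {e w τ τ' : Finset α}
    (hp : PairedET K prec e w) (hτ : τ ∈ K) (hτ3 : τ.card = 3) (heτ : e ⊆ τ) (hτ' : τ' ∈ K)
    (hτ'3 : τ'.card = 3) (heτ' : e ⊆ τ') (hne : τ ≠ τ')
    (hw : (triGraph K prec e).Reachable τ w) :
    ∃ M, (triGraph K prec e).Reachable τ' M ∧ prec w M := by
  obtain ⟨s, t, ws, wt, hst, hs, ht, hs3, ht3, hes, het, he, he2, hnr, hgs, hgt, hw'⟩ := hp
  obtain ⟨a, -, b, -, -, -, -, -, -, huniq⟩ := hman.2.2 e he he2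
  have hpair : ∀ ρ ∈ K, ρ.card = 3 → e ⊆ ρ → ρ = s ∨ ρ = t := fun ρ hρ hρ3 heρ => by
    rcases huniq s hs hs3 hes with rfl | rfl <;> rcases huniq t ht ht3 het with rfl | rfl <;>
      rcases huniq ρ hρ hρ3 heρ with rfl | rfl <;> simp_all
  rcases hpair τ hτ hτ3 heτ with rfl | rfl <;> rcases hpair τ' hτ' hτ'3 heτ' with rfl | rfl
  · exact absurd rfl hne
  · rcases hw' with ⟨hp, rfl⟩ | ⟨-, rfl⟩
    · exact ⟨wt, hgt.1, hp⟩
    · exact absurd (hw.trans hgt.1.symm) hnr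
  · rcases hw' with ⟨-, rfl⟩ | ⟨hp, rfl⟩
    · exact absurd (hgs.1.trans hw.symm) hnr
    · exact ⟨ws, hgs.1, hp⟩
  · exact absurd rfl hne

variable [DecidableEq α]

/-- An edge after `c` on the boundary of a union of components of `G^{≻c}` would join a
triangle inside to one outside. -/
lemma ClosedTwoManifold.not_prec_of_boundary (hman : ClosedTwoManifold K) {c : Finset α}
    {S : Finset (Finset α)} (hS : ∀ τ ∈ S, τ ∈ K ∧ τ.card = 3)
    (hSc : ∀ σ τ, (triGraph K prec c).Adj σ τ → σ ∈ S → τ ∈ S) {d : Finset α} (hd : d ∈ K)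
    (hd2 : d.card = 2) (hb : #{τ ∈ S | d ⊆ τ} = 1) : ¬ prec c d := by
  intro hcd
  obtain ⟨s, hs, t, ht, hst, hs3, ht3, hds, hdt, huniq⟩ := hman.2.2 d hd hd2
  obtain ⟨τ, hτ⟩ := card_eq_one.1 hb
  have hmem : ∀ ρ, ρ ∈ S → d ⊆ ρ → ρ = τ := fun ρ hρ hdρ => by
    simpa [hτ] using (show ρ ∈ {τ ∈ S | d ⊆ τ} from mem_filter.2 ⟨hρ, hdρ⟩)
  obtain ⟨hτS, hdτ⟩ := mem_filter.1 (hτ ▸ mem_singleton_self τ)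
  have hadj : (triGraph K prec c).Adj s t := ⟨hst, hs, ht, hs3, ht3, d, hd, hd2, hds, hdt, hcd⟩
  rcases huniq τ (hS τ hτS).1 (hS τ hτS).2 hdτ with rfl | rfl
  · exact hst (hmem t (hSc _ _ hadj hτS) hdt).symm
  · exact hst (hmem s (hSc _ _ hadj.symm hτS) hds)

lemma PairedVE.not_reachable {x y w : α} (hp : PairedVE K prec w {x, y}) :
    ¬ (vertGraph K prec {x, y}).Reachable x y := by
  obtain ⟨x', y', -, -, heq, hne, -, hnr, -⟩ := hp
  have hx : x ∈ ({x', y'} : Finset α) := heq ▸ mem_insert_self x {y}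
  have hy : y ∈ ({x', y'} : Finset α) := heq ▸ mem_insert_of_mem (mem_singleton_self y)
  simp only [mem_insert, mem_singleton] at hx hy
  rcases hx with rfl | rfl <;> rcases hy with rfl | rfl
  · simpa [hne] using congrArg card heq
  · exact hnr
  · exact fun h => hnr h.symm
  · simpa [hne] using congrArg card heq

end Pairings

/-- The hypotheses of the theorem, bundled so that the symmetry exchanging the two triangles
`t₁` and `t₂` on `{u, v}` is available as `AdmissibleEdge.swap`. -/
structure AdmissibleEdge (V : Type*) [Fintype V] [DecidableEq V] where
  K : Finset (Finset V)
  prec : Finset V → Finset V → Prop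
  u : V
  v : V
  t₁ : Finset V
  t₂ : Finset V
  e₁ : Finset V
  e₁' : Finset V
  e₂ : Finset V
  e₂' : Finset V
  isComplex : IsComplex K
  manifold : ClosedTwoManifold K
  prec_irrefl : ∀ σ, ¬ prec σ σ
  prec_trans : ∀ σ τ ρ, prec σ τ → prec τ ρ → prec σ ρ
  prec_total : ∀ σ ∈ K, ∀ τ ∈ K, σ ≠ τ → prec σ τ ∨ prec τ σ
  prec_of_ssubset : ∀ σ ∈ K, ∀ τ ∈ K, σ ⊂ τ → prec σ τ
  u_ne_v : u ≠ v
  t₁_mem : t₁ ∈ K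
  card_t₁ : t₁.card = 3
  uv_subset_t₁ : {u, v} ⊆ t₁
  t₂_mem : t₂ ∈ K
  card_t₂ : t₂.card = 3
  uv_subset_t₂ : {u, v} ⊆ t₂
  t₁_ne_t₂ : t₁ ≠ t₂
  eq_t₁_or_t₂ : ∀ t ∈ K, t.card = 3 → {u, v} ⊆ t → t = t₁ ∨ t = t₂
  e₁_subset : e₁ ⊆ t₁
  card_e₁ : e₁.card = 2
  e₁_ne_uv : e₁ ≠ {u, v}
  e₁'_subset : e₁' ⊆ t₁
  card_e₁' : e₁'.card = 2
  e₁'_ne_uv : e₁' ≠ {u, v}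
  prec_e₁ : prec e₁ e₁'
  e₂_subset : e₂ ⊆ t₂
  card_e₂ : e₂.card = 2
  e₂_ne_uv : e₂ ≠ {u, v}
  e₂'_subset : e₂' ⊆ t₂
  card_e₂' : e₂'.card = 2
  e₂'_ne_uv : e₂' ≠ {u, v}
  prec_e₂ : prec e₂ e₂'
  link : LinkCond K u v
  not_reachable : ¬ (vertGraph K prec {u, v}).Reachable u v
  paired₁ : PairedET K prec e₁' t₁
  paired₂ : PairedET K prec e₂' t₂

namespace AdmissibleEdge

variable {V : Type*} [Fintype V] [DecidableEq V] (C : AdmissibleEdge V)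

def swap : AdmissibleEdge V where
  K := C.K
  prec := C.prec
  u := C.u
  v := C.v
  t₁ := C.t₂
  t₂ := C.t₁
  e₁ := C.e₂
  e₁' := C.e₂'
  e₂ := C.e₁
  e₂' := C.e₁'
  isComplex := C.isComplex
  manifold := C.manifold
  prec_irrefl := C.prec_irrefl
  prec_trans := C.prec_trans
  prec_total := C.prec_total
  prec_of_ssubset := C.prec_of_ssubset
  u_ne_v := C.u_ne_v
  t₁_mem := C.t₂_mem
  card_t₁ := C.card_t₂
  uv_subset_t₁ := C.uv_subset_t₂
  t₂_mem := C.t₁_mem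
  card_t₂ := C.card_t₁
  uv_subset_t₂ := C.uv_subset_t₁
  t₁_ne_t₂ := C.t₁_ne_t₂.symm
  eq_t₁_or_t₂ := fun t ht ht3 huv => (C.eq_t₁_or_t₂ t ht ht3 huv).symm
  e₁_subset := C.e₂_subset
  card_e₁ := C.card_e₂
  e₁_ne_uv := C.e₂_ne_uv
  e₁'_subset := C.e₂'_subset
  card_e₁' := C.card_e₂'
  e₁'_ne_uv := C.e₂'_ne_uv
  prec_e₁ := C.prec_e₂
  e₂_subset := C.e₁_subset
  card_e₂ := C.card_e₁
  e₂_ne_uv := C.e₁_ne_uv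
  e₂'_subset := C.e₁'_subset
  card_e₂' := C.card_e₁'
  e₂'_ne_uv := C.e₁'_ne_uv
  prec_e₂ := C.prec_e₁
  link := C.link
  not_reachable := C.not_reachable
  paired₁ := C.paired₂
  paired₂ := C.paired₁

lemma prec_asymm {σ τ : Finset V} (h : C.prec σ τ) : ¬ C.prec τ σ :=
  fun h' => C.prec_irrefl σ (C.prec_trans _ _ _ h h')

lemma ne_of_prec {σ τ : Finset V} (h : C.prec σ τ) : σ ≠ τ :=
  fun heq => C.prec_irrefl σ (heq ▸ h)

lemma mem_of_subset {σ τ : Finset V} (hτ : τ ∈ C.K) (hστ : σ ⊆ τ) (hσ : σ.Nonempty) : σ ∈ C.K :=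
  C.isComplex.mem_of_subset hτ hστ hσ

lemma card_le_three {σ : Finset V} (hσ : σ ∈ C.K) : σ.card ≤ 3 := C.manifold.1 σ hσ

lemma card_uv : ({C.u, C.v} : Finset V).card = 2 := card_pair C.u_ne_v

lemma uv_mem : {C.u, C.v} ∈ C.K := C.mem_of_subset C.t₁_mem C.uv_subset_t₁ (insert_nonempty _ _)

lemma e₁_mem : C.e₁ ∈ C.K :=
  C.mem_of_subset C.t₁_mem C.e₁_subset (card_pos.1 (by rw [C.card_e₁]; norm_num))

lemma e₁'_mem : C.e₁' ∈ C.K :=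
  C.mem_of_subset C.t₁_mem C.e₁'_subset (card_pos.1 (by rw [C.card_e₁']; norm_num))

lemma uv_subset_iff {σ : Finset V} : {C.u, C.v} ⊆ σ ↔ C.u ∈ σ ∧ C.v ∈ σ := by
  simp [insert_subset_iff]

lemma eq_uv_of_card_two {d : Finset V} (hd2 : d.card = 2) (hu : C.u ∈ d) (hv : C.v ∈ d) :
    d = {C.u, C.v} :=
  (eq_of_subset_of_card_le (C.uv_subset_iff.2 ⟨hu, hv⟩) (by rw [hd2, C.card_uv])).symm

lemma eq_t₁_or_t₂_of_mem {τ : Finset V} (hτ : τ ∈ C.K) (hτ3 : τ.card = 3) (hu : C.u ∈ τ)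
    (hv : C.v ∈ τ) : τ = C.t₁ ∨ τ = C.t₂ :=
  C.eq_t₁_or_t₂ τ hτ hτ3 (C.uv_subset_iff.2 ⟨hu, hv⟩)

lemma eq_of_subset_t₁ {d : Finset V} (hdt : d ⊆ C.t₁) (hd2 : d.card = 2) :
    d = {C.u, C.v} ∨ d = C.e₁ ∨ d = C.e₁' := by
  set E : Finset (Finset V) := {{C.u, C.v}, C.e₁, C.e₁'}
  have hsub : E ⊆ C.t₁.powersetCard 2 := by
    simp [E, insert_subset_iff, mem_powersetCard, C.uv_subset_t₁, C.card_uv, C.e₁_subset,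
      C.card_e₁, C.e₁'_subset, C.card_e₁']
  have hcard : (C.t₁.powersetCard 2).card ≤ E.card := by
    rw [card_powersetCard, C.card_t₁, card_insert_of_notMem, card_pair (C.ne_of_prec C.prec_e₁)]
    · rfl
    · simp [C.e₁_ne_uv.symm, C.e₁'_ne_uv.symm]
  have hd : d ∈ E := (eq_of_subset_of_card_le hsub hcard).symm ▸ mem_powersetCard.2 ⟨hdt, hd2⟩
  simpa [E] using hd

lemma eq_uv_of_subset_t₁_t₂ {d : Finset V} (h₁ : d ⊆ C.t₁) (h₂ : d ⊆ C.t₂) (hd2 : d.card = 2) :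
    d = {C.u, C.v} := by
  by_contra hne
  have h3 := three_le_card_union hd2 C.card_uv hne
  have ht : ∀ t : Finset V, t.card = 3 → d ⊆ t → {C.u, C.v} ⊆ t → t = d ∪ {C.u, C.v} :=
    fun t ht hdt huvt => (eq_of_subset_of_card_le (union_subset hdt huvt) (ht ▸ h3)).symm
  exact C.t₁_ne_t₂ ((ht _ C.card_t₁ h₁ C.uv_subset_t₁).trans
    (ht _ C.card_t₂ h₂ C.uv_subset_t₂).symm)

/-! ### Fibres of the contraction -/

lemma not_mem_and_mem_of_card_two {d : Finset V} (hd2 : d.card = 2) (hd : d ≠ {C.u, C.v}) :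
    ¬ (C.u ∈ d ∧ C.v ∈ d) :=
  fun h => hd (C.eq_uv_of_card_two hd2 h.1 h.2)

lemma card_xi_of_card_two {d : Finset V} (hd2 : d.card = 2) (hd : d ≠ {C.u, C.v}) :
    (xi C.u C.v d).card = 2 :=
  (card_xi (C.not_mem_and_mem_of_card_two hd2 hd)).trans hd2

lemma card_xi_uv : (xi C.u C.v {C.u, C.v}).card = 1 := by
  rw [xi_of_mem C.u_ne_v (mem_insert_self _ _) (by simp), card_erase_of_mem (by simp), C.card_uv]

lemma insert_xi_t₁ : insert C.v (xi C.u C.v C.t₁) = C.t₁ := by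
  obtain ⟨hu, hv⟩ := C.uv_subset_iff.1 C.uv_subset_t₁
  rw [xi_of_mem C.u_ne_v hu hv, insert_erase hv]

lemma card_xi_t₁ : (xi C.u C.v C.t₁).card = 2 := by
  obtain ⟨hu, hv⟩ := C.uv_subset_iff.1 C.uv_subset_t₁
  rw [xi_of_mem C.u_ne_v hu hv, card_erase_of_mem hv, C.card_t₁]

lemma card_xi_t₂ : (xi C.u C.v C.t₂).card = 2 := C.swap.card_xi_t₁

lemma xi_eq_xi_t₁_of_subset {d : Finset V} (hdt : d ⊆ C.t₁) (hd2 : d.card = 2)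
    (hd : d ≠ {C.u, C.v}) : xi C.u C.v d = xi C.u C.v C.t₁ :=
  eq_of_subset_of_card_le (image_subset_image hdt)
    (by rw [C.card_xi_t₁, C.card_xi_of_card_two hd2 hd])

lemma xi_e₁ : xi C.u C.v C.e₁ = xi C.u C.v C.t₁ :=
  C.xi_eq_xi_t₁_of_subset C.e₁_subset C.card_e₁ C.e₁_ne_uv

lemma xi_e₁' : xi C.u C.v C.e₁' = xi C.u C.v C.t₁ :=
  C.xi_eq_xi_t₁_of_subset C.e₁'_subset C.card_e₁' C.e₁'_ne_uv

/-- By the link condition `ξ ρ ∪ {v}` lies in `K`, so it is `{u, v}` or a triangle on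
`{u, v}`. -/
lemma xi_eq_of_xi_eq {ρ σ : Finset V} (hρ : ρ ∈ C.K) (hσ : σ ∈ C.K)
    (h : xi C.u C.v ρ = xi C.u C.v σ) (hne : ρ ≠ σ) :
    xi C.u C.v ρ = xi C.u C.v {C.u, C.v} ∨ xi C.u C.v ρ = xi C.u C.v C.t₁ ∨
      xi C.u C.v ρ = xi C.u C.v C.t₂ := by
  have hu : C.u ∈ xi C.u C.v ρ := by
    by_contra hu
    have hvρ : C.v ∉ ρ := fun hv => hu (mem_xi.2 (Or.inr ⟨rfl, hv⟩))
    have hvσ : C.v ∉ σ := fun hv => hu (h ▸ mem_xi.2 (Or.inr ⟨rfl, hv⟩))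
    exact hne (by rwa [xi_of_notMem hvρ, xi_of_notMem hvσ] at h)
  have hv := notMem_xi C.u_ne_v ρ
  have hX := C.link.insert_xi_mem C.isComplex C.uv_mem C.u_ne_v hρ hσ h hne
  have hXuv : {C.u, C.v} ⊆ insert C.v (xi C.u C.v ρ) := C.uv_subset_iff.2 ⟨by simp [hu], by simp⟩
  rw [← xi_insert_self C.u_ne_v hu hv]
  have hcard := C.card_le_three hX
  rw [card_insert_of_notMem hv] at hcard
  rcases Nat.lt_or_ge (xi C.u C.v ρ).card 2 with h1 | h2
  · left
    congr 1
    exact (eq_of_subset_of_card_le hXuv (by rw [card_insert_of_notMem hv, C.card_uv]; omega)).symm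
  · right
    rcases C.eq_t₁_or_t₂ _ hX (by rw [card_insert_of_notMem hv]; omega) hXuv with h' | h' <;>
      rw [h'] <;> simp

lemma eq_of_xi_eq_xi_t₁ {ρ : Finset V} (hρ : ρ ∈ C.K) (h : xi C.u C.v ρ = xi C.u C.v C.t₁) :
    ρ = C.e₁ ∨ ρ = C.e₁' ∨ ρ = C.t₁ := by
  have hsub : ρ ⊆ C.t₁ := C.insert_xi_t₁ ▸ h ▸ subset_insert_xi ρ
  have h2 := card_xi_le (u := C.u) (v := C.v) ρ
  rw [h, C.card_xi_t₁] at h2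
  rcases (C.card_le_three hρ).eq_or_lt with h3 | h3
  · exact Or.inr (Or.inr (eq_of_subset_of_card_le hsub (by rw [h3, C.card_t₁])))
  · rcases C.eq_of_subset_t₁ hsub (by omega) with rfl | h' | h'
    · exact absurd (h ▸ C.card_xi_uv) (by rw [C.card_xi_t₁]; norm_num)
    · exact Or.inl h'
    · exact Or.inr (Or.inl h')

lemma minPre_e₁ : MinPre C.K C.u C.v C.prec (xi C.u C.v C.t₁) C.e₁ := by
  refine ⟨C.e₁_mem, C.xi_e₁, fun ρ hρ h => ?_⟩
  rcases C.eq_of_xi_eq_xi_t₁ hρ h with rfl | rfl | rfl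
  · exact Or.inl rfl
  · exact Or.inr C.prec_e₁
  · exact Or.inr (C.prec_of_ssubset _ C.e₁_mem _ C.t₁_mem
      (ssubset_of_subset_of_ne C.e₁_subset fun h => by simpa [h, C.card_t₁] using C.card_e₁))

/-! ### Least preimages -/

def K' : Finset (Finset V) := C.K.image (xi C.u C.v)

def prec' : Finset V → Finset V → Prop := precInd C.K C.u C.v C.prec

structure KeptTri (τ : Finset V) : Prop where
  mem : τ ∈ C.K
  card : τ.card = 3
  ne_t₁ : τ ≠ C.t₁
  ne_t₂ : τ ≠ C.t₂

structure KeptEdge (d : Finset V) : Prop where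
  mem : d ∈ C.K
  card : d.card = 2
  ne_uv : d ≠ {C.u, C.v}
  ne_e₁' : d ≠ C.e₁'
  ne_e₂' : d ≠ C.e₂'

variable {C}

lemma KeptTri.swap {τ : Finset V} (h : C.KeptTri τ) : C.swap.KeptTri τ :=
  ⟨h.mem, h.card, h.ne_t₂, h.ne_t₁⟩

lemma KeptEdge.swap {d : Finset V} (h : C.KeptEdge d) : C.swap.KeptEdge d :=
  ⟨h.mem, h.card, h.ne_uv, h.ne_e₂', h.ne_e₁'⟩

lemma KeptTri.card_xi {τ : Finset V} (h : C.KeptTri τ) : (xi C.u C.v τ).card = 3 :=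
  (_root_.card_xi fun huv =>
    (C.eq_t₁_or_t₂_of_mem h.mem h.card huv.1 huv.2).elim h.ne_t₁ h.ne_t₂).trans h.card

lemma KeptEdge.card_xi {d : Finset V} (h : C.KeptEdge d) : (xi C.u C.v d).card = 2 :=
  C.card_xi_of_card_two h.card h.ne_uv

lemma KeptTri.eq_of_xi_eq {τ ρ : Finset V} (h : C.KeptTri τ) (hρ : ρ ∈ C.K)
    (hξ : xi C.u C.v ρ = xi C.u C.v τ) : ρ = τ := by
  by_contra hne
  have h3 := hξ ▸ h.card_xi
  rcases C.xi_eq_of_xi_eq hρ h.mem hξ hne with h' | h' | h' <;> rw [h'] at h3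
  · simp [C.card_xi_uv] at h3
  · simp [C.card_xi_t₁] at h3
  · simp [C.card_xi_t₂] at h3

lemma KeptTri.minPre {τ : Finset V} (h : C.KeptTri τ) :
    MinPre C.K C.u C.v C.prec (xi C.u C.v τ) τ :=
  ⟨h.mem, rfl, fun _ hρ hξ => Or.inl (h.eq_of_xi_eq hρ hξ)⟩

lemma KeptEdge.eq_e₁ {d : Finset V} (h : C.KeptEdge d) (hξ : xi C.u C.v d = xi C.u C.v C.t₁) :
    d = C.e₁ := by
  rcases C.eq_of_xi_eq_xi_t₁ h.mem hξ with h' | h' | rfl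
  · exact h'
  · exact absurd h' h.ne_e₁'
  · simpa [h.card] using C.card_t₁

lemma KeptEdge.minPre {d : Finset V} (h : C.KeptEdge d) :
    MinPre C.K C.u C.v C.prec (xi C.u C.v d) d := by
  refine ⟨h.mem, rfl, fun ρ hρ hξ => ?_⟩
  by_cases hne : ρ = d
  · exact Or.inl hne
  rcases C.xi_eq_of_xi_eq hρ h.mem hξ hne with h' | h' | h'
  · simpa [← hξ, h', C.card_xi_uv] using h.card_xi
  · obtain rfl := h.eq_e₁ (hξ ▸ h')
    exact C.minPre_e₁.2.2 ρ hρ (hξ.trans C.xi_e₁)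
  · obtain rfl := h.swap.eq_e₁ (hξ ▸ h')
    exact C.swap.minPre_e₁.2.2 ρ hρ (hξ.trans C.swap.xi_e₁)

variable (C)

lemma minPre_unique {σ' σ τ : Finset V} (hσ : MinPre C.K C.u C.v C.prec σ' σ)
    (hτ : MinPre C.K C.u C.v C.prec σ' τ) : σ = τ :=
  (hσ.2.2 τ hτ.1 hτ.2.1).elim Eq.symm fun h =>
    (hτ.2.2 σ hσ.1 hσ.2.1).elim id fun h' => absurd h' (C.prec_asymm h)

lemma exists_minPre {σ' : Finset V} (h : σ' ∈ C.K') :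
    ∃ σ, MinPre C.K C.u C.v C.prec σ' σ := by
  have : IsTrans (Finset V) C.prec := ⟨C.prec_trans⟩
  have : Std.Irrefl C.prec := ⟨C.prec_irrefl⟩
  obtain ⟨σ, hσ, hmin⟩ := (Finite.wellFounded_of_trans_of_irrefl C.prec).has_min
    {ρ | ρ ∈ C.K ∧ xi C.u C.v ρ = σ'} (by obtain ⟨ρ, hρ⟩ := mem_image.1 h; exact ⟨ρ, hρ⟩)
  refine ⟨σ, hσ.1, hσ.2, fun ρ hρ hξ => ?_⟩
  by_cases hne : ρ = σ
  · exact Or.inl hne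
  · exact Or.inr ((C.prec_total _ hρ _ hσ.1 hne).resolve_left (hmin ρ ⟨hρ, hξ⟩))

def pre (σ' : Finset V) : Finset V := Classical.epsilon (MinPre C.K C.u C.v C.prec σ')

lemma minPre_pre {σ' : Finset V} (h : σ' ∈ C.K') : MinPre C.K C.u C.v C.prec σ' (C.pre σ') :=
  Classical.epsilon_spec (C.exists_minPre h)

lemma pre_eq {σ' σ : Finset V} (h : MinPre C.K C.u C.v C.prec σ' σ) : C.pre σ' = σ :=
  C.minPre_unique (C.minPre_pre (h.2.1 ▸ mem_image_of_mem _ h.1)) h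

lemma xi_pre {σ' : Finset V} (h : σ' ∈ C.K') : xi C.u C.v (C.pre σ') = σ' :=
  (C.minPre_pre h).2.1

lemma prec'_iff {σ' τ' σ τ : Finset V} (hσ : MinPre C.K C.u C.v C.prec σ' σ)
    (hτ : MinPre C.K C.u C.v C.prec τ' τ) : C.prec' σ' τ' ↔ C.prec σ τ :=
  ⟨fun ⟨_, _, hσ', hτ', h⟩ => C.minPre_unique hσ' hσ ▸ C.minPre_unique hτ' hτ ▸ h,
    fun h => ⟨σ, τ, hσ, hτ, h⟩⟩

lemma keptTri_pre {s' : Finset V} (h : s' ∈ C.K') (h3 : s'.card = 3) : C.KeptTri (C.pre s') := by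
  have hmin := C.minPre_pre h
  have hξ : xi C.u C.v (C.pre s') = s' := hmin.2.1
  have hcard := card_xi_le (u := C.u) (v := C.v) (C.pre s')
  rw [hξ, h3] at hcard
  refine ⟨hmin.1, le_antisymm (C.card_le_three hmin.1) hcard, fun hs => ?_, fun hs => ?_⟩
  · have := C.card_xi_t₁
    rw [← hs, hξ, h3] at this
    omega
  · have := C.card_xi_t₂
    rw [← hs, hξ, h3] at this
    omega

lemma keptEdge_pre {d' : Finset V} (h : d' ∈ C.K') (h2 : d'.card = 2) :
    C.KeptEdge (C.pre d') := by
  have hmin := C.minPre_pre h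
  set δ := C.pre d'
  have hξ : xi C.u C.v δ = d' := hmin.2.1
  have hδ2 : (xi C.u C.v δ).card = 2 := hξ ▸ h2
  have he₁ : xi C.u C.v δ = xi C.u C.v C.t₁ → δ = C.e₁ := fun h' =>
    C.minPre_unique (hξ.symm.trans h' ▸ hmin) C.minPre_e₁
  have he₂ : xi C.u C.v δ = xi C.u C.v C.t₂ → δ = C.e₂ := fun h' =>
    C.minPre_unique (hξ.symm.trans h' ▸ hmin) C.swap.minPre_e₁
  have hcard : δ.card = 2 := by
    have hle := card_xi_le (u := C.u) (v := C.v) δ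
    rw [hδ2] at hle
    by_contra hne
    have h3 : δ.card = 3 := by have := C.card_le_three hmin.1; omega
    by_cases huv : C.u ∈ δ ∧ C.v ∈ δ
    · rcases C.eq_t₁_or_t₂_of_mem hmin.1 h3 huv.1 huv.2 with ht | ht
      · simp [he₁ (by rw [ht]), C.card_e₁] at h3
      · simp [he₂ (by rw [ht]), C.card_e₂] at h3
    · rw [_root_.card_xi huv, h3] at hδ2
      omega
  refine ⟨hmin.1, hcard, fun huv => ?_, fun he => ?_, fun he => ?_⟩
  · rw [huv, C.card_xi_uv] at hδ2
    omega
  · exact C.ne_of_prec C.prec_e₁ ((he₁ (he ▸ C.xi_e₁')).symm.trans he)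
  · exact C.ne_of_prec C.prec_e₂ ((he₂ (he ▸ C.swap.xi_e₁')).symm.trans he)

lemma KeptTri.pre_xi {C : AdmissibleEdge V} {τ : Finset V} (h : C.KeptTri τ) :
    C.pre (xi C.u C.v τ) = τ :=
  C.pre_eq h.minPre

lemma e₁_ne_e₂ : C.e₁ ≠ C.e₂ := fun h =>
  C.e₁_ne_uv (C.eq_uv_of_subset_t₁_t₂ C.e₁_subset (h ▸ C.e₂_subset) C.card_e₁)

lemma e₁_ne_e₂' : C.e₁ ≠ C.e₂' := fun h =>
  C.e₁_ne_uv (C.eq_uv_of_subset_t₁_t₂ C.e₁_subset (h ▸ C.e₂'_subset) C.card_e₁)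

lemma keptEdge_e₁ : C.KeptEdge C.e₁ :=
  ⟨C.e₁_mem, C.card_e₁, C.e₁_ne_uv, C.ne_of_prec C.prec_e₁, C.e₁_ne_e₂'⟩

lemma KeptEdge.eq_e₁_of_subset {C : AdmissibleEdge V} {d : Finset V} (hd : C.KeptEdge d)
    (h : d ⊆ C.t₁) : d = C.e₁ :=
  ((C.eq_of_subset_t₁ h hd.card).resolve_left hd.ne_uv).resolve_right hd.ne_e₁'

lemma KeptEdge.of_xi_eq_xi_t₁ {C : AdmissibleEdge V} {d τ ρ : Finset V} (hd : C.KeptEdge d)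
    (hτ : C.KeptTri τ) (hρ : ρ ∈ C.K) (hρτ : ρ ⊆ τ) (hρd : ρ ≠ d)
    (hξ : xi C.u C.v ρ = xi C.u C.v d) (ht : xi C.u C.v ρ = xi C.u C.v C.t₁) :
    d = C.e₁ ∧ C.e₁' ⊆ τ := by
  obtain rfl := hd.eq_e₁ (hξ ▸ ht)
  rcases C.eq_of_xi_eq_xi_t₁ hρ ht with rfl | rfl | rfl
  · exact absurd rfl hρd
  · exact ⟨rfl, hρτ⟩
  · exact absurd (eq_of_subset_of_card_le hρτ (by rw [hτ.card, C.card_t₁])).symm hτ.ne_t₁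

lemma KeptEdge.subset_or_of_xi_subset {C : AdmissibleEdge V} {d τ : Finset V}
    (hd : C.KeptEdge d) (hτ : C.KeptTri τ) (h : xi C.u C.v d ⊆ xi C.u C.v τ) :
    d ⊆ τ ∨ (d = C.e₁ ∧ C.e₁' ⊆ τ) ∨ (d = C.e₂ ∧ C.e₂' ⊆ τ) := by
  obtain ⟨ρ, hρτ, hξ : xi C.u C.v ρ = xi C.u C.v d⟩ := subset_image_iff.1 h
  have hρ : ρ ∈ C.K := C.mem_of_subset hτ.mem hρτ
    (image_nonempty.1 (hξ ▸ card_pos.1 (hd.card_xi ▸ two_pos)))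
  by_cases hρd : ρ = d
  · exact Or.inl (hρd ▸ hρτ)
  rcases C.xi_eq_of_xi_eq hρ hd.mem hξ hρd with h' | h' | h'
  · have := hd.card_xi
    rw [← hξ, h', C.card_xi_uv] at this
    omega
  · exact Or.inr (Or.inl (hd.of_xi_eq_xi_t₁ hτ hρ hρτ hρd hξ h'))
  · exact Or.inr (Or.inr (hd.swap.of_xi_eq_xi_t₁ hτ.swap hρ hρτ hρd hξ h'))

/-! ### Arcs of the dual graph of `K'` come from paths in that of `K` -/

def dual (c : Finset V) : SimpleGraph (Finset V) := triGraph C.K C.prec c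

def dual' (c : Finset V) : SimpleGraph (Finset V) := triGraph C.K' C.prec' (xi C.u C.v c)

lemma adj_xi {e d σ τ : Finset V} (he : C.KeptEdge e) (hd : C.KeptEdge d) (hσ : C.KeptTri σ)
    (hτ : C.KeptTri τ) (hστ : σ ≠ τ) (hdσ : xi C.u C.v d ⊆ xi C.u C.v σ)
    (hdτ : xi C.u C.v d ⊆ xi C.u C.v τ) (hed : C.prec e d) :
    (C.dual' e).Adj (xi C.u C.v σ) (xi C.u C.v τ) :=
  ⟨fun h => hστ (hσ.eq_of_xi_eq hτ.mem h.symm).symm, mem_image_of_mem _ hσ.mem,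
    mem_image_of_mem _ hτ.mem, hσ.card_xi, hτ.card_xi, xi C.u C.v d, mem_image_of_mem _ hd.mem,
    hd.card_xi, hdσ, hdτ, (C.prec'_iff he.minPre hd.minPre).2 hed⟩

lemma adj_t₁ {e σ : Finset V} (he : C.prec e C.e₁) (hσ : C.KeptTri σ)
    (h : C.e₁ ⊆ σ ∨ C.e₁' ⊆ σ) : (C.dual e).Adj σ C.t₁ := by
  refine ⟨hσ.ne_t₁, hσ.mem, C.t₁_mem, hσ.card, C.card_t₁, ?_⟩
  rcases h with h | h
  · exact ⟨C.e₁, C.e₁_mem, C.card_e₁, h, C.e₁_subset, he⟩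
  · exact ⟨C.e₁', C.e₁'_mem, C.card_e₁', h, C.e₁'_subset, C.prec_trans _ _ _ he C.prec_e₁⟩

lemma reachable_of_subset_e₁ {e σ τ : Finset V} (he : C.prec e C.e₁) (hσ : C.KeptTri σ)
    (hτ : C.KeptTri τ) (hσ₁ : C.e₁ ⊆ σ ∨ C.e₁' ⊆ σ) (hτ₁ : C.e₁ ⊆ τ ∨ C.e₁' ⊆ τ) :
    (C.dual e).Reachable σ τ :=
  (C.adj_t₁ he hσ hσ₁).reachable.trans (C.adj_t₁ he hτ hτ₁).reachable.symm

lemma KeptTri.subset_e₁_or {C : AdmissibleEdge V} {τ : Finset V} (hτ : C.KeptTri τ)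
    (h : xi C.u C.v C.e₁ ⊆ xi C.u C.v τ) : C.e₁ ⊆ τ ∨ C.e₁' ⊆ τ := by
  rcases C.keptEdge_e₁.subset_or_of_xi_subset hτ h with h' | ⟨-, h'⟩ | ⟨h', -⟩
  exacts [Or.inl h', Or.inr h', absurd h' C.e₁_ne_e₂]

lemma reachable_pre_of_adj {e x' y' : Finset V} (he : C.KeptEdge e) (h : (C.dual' e).Adj x' y') :
    (C.dual e).Reachable (C.pre x') (C.pre y') := by
  obtain ⟨hne, hx, hy, hx3, hy3, d', hd', hd'2, hdx, hdy, hp⟩ := h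
  have hσ := C.keptTri_pre hx hx3
  have hμ := C.keptTri_pre hy hy3
  have hδ := C.keptEdge_pre hd' hd'2
  have hpδ : C.prec e (C.pre d') := (C.prec'_iff he.minPre (C.minPre_pre hd')).1 hp
  have hδσ : xi C.u C.v (C.pre d') ⊆ xi C.u C.v (C.pre x') := by
    rwa [C.xi_pre hd', C.xi_pre hx]
  have hδμ : xi C.u C.v (C.pre d') ⊆ xi C.u C.v (C.pre y') := by
    rwa [C.xi_pre hd', C.xi_pre hy]
  by_cases h₁ : C.pre d' = C.e₁
  · rw [h₁] at hδσ hδμ hpδ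
    exact C.reachable_of_subset_e₁ hpδ hσ hμ (hσ.subset_e₁_or hδσ) (hμ.subset_e₁_or hδμ)
  by_cases h₂ : C.pre d' = C.e₂
  · rw [h₂] at hδσ hδμ hpδ
    exact C.swap.reachable_of_subset_e₁ hpδ hσ.swap hμ.swap (hσ.swap.subset_e₁_or hδσ)
      (hμ.swap.subset_e₁_or hδμ)
  have hsub : ∀ τ, C.KeptTri τ → xi C.u C.v (C.pre d') ⊆ xi C.u C.v τ → C.pre d' ⊆ τ :=
    fun τ hτ h => by rcases hδ.subset_or_of_xi_subset hτ h with h | h | h <;> simp_all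
  refine (SimpleGraph.Adj.reachable ⟨fun h => hne ?_, hσ.mem, hμ.mem, hσ.card, hμ.card, C.pre d',
    hδ.mem, hδ.card, hsub _ hσ hδσ, hsub _ hμ hδμ, hpδ⟩)
  rw [← C.xi_pre hx, ← C.xi_pre hy, h]

lemma reachable_pre {e x' y' : Finset V} (he : C.KeptEdge e) (h : (C.dual' e).Reachable x' y') :
    (C.dual e).Reachable (C.pre x') (C.pre y') :=
  h.lift C.pre fun _ _ => C.reachable_pre_of_adj he

/-! ### Paths in the dual graph of `K` give paths in that of `K'` -/

lemma exists_s₁ : ∃ s ∈ C.K, s.card = 3 ∧ C.e₁' ⊆ s ∧ s ≠ C.t₁ ∧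
    ∀ ρ ∈ C.K, ρ.card = 3 → C.e₁' ⊆ ρ → ρ = C.t₁ ∨ ρ = s :=
  C.manifold.exists_other_triangle C.e₁'_mem C.card_e₁' C.t₁_mem C.card_t₁ C.e₁'_subset

/-- The triangle other than `t₁` on `e₁'`. -/
def s₁ : Finset V := C.exists_s₁.choose

def s₂ : Finset V := C.swap.s₁

lemma e₁'_subset_s₁ : C.e₁' ⊆ C.s₁ := C.exists_s₁.choose_spec.2.2.1

lemma eq_t₁_or_s₁ {ρ : Finset V} (hρ : ρ ∈ C.K) (hρ3 : ρ.card = 3) (h : C.e₁' ⊆ ρ) :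
    ρ = C.t₁ ∨ ρ = C.s₁ :=
  C.exists_s₁.choose_spec.2.2.2.2 ρ hρ hρ3 h

lemma keptTri_s₁ : C.KeptTri C.s₁ := by
  obtain ⟨hs, hs3, hes, hst, -⟩ := C.exists_s₁.choose_spec
  exact ⟨hs, hs3, hst, fun h => C.e₁'_ne_uv (C.eq_uv_of_subset_t₁_t₂ C.e₁'_subset
    (h ▸ hes) C.card_e₁')⟩

lemma adj_t₁_s₁ {e : Finset V} (he : C.prec e C.e₁') : (C.dual e).Adj C.t₁ C.s₁ :=
  ⟨C.keptTri_s₁.ne_t₁.symm, C.t₁_mem, C.keptTri_s₁.mem, C.card_t₁, C.keptTri_s₁.card, C.e₁',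
    C.e₁'_mem, C.card_e₁', C.e₁'_subset, C.e₁'_subset_s₁, he⟩

/-- `t₁` and `t₂` collapse to edges under `ξ`; in `K'` they are represented by `s₁` and `s₂`. -/
def rep (τ : Finset V) : Finset V := if τ = C.t₁ then C.s₁ else if τ = C.t₂ then C.s₂ else τ

lemma rep_t₁ : C.rep C.t₁ = C.s₁ := if_pos rfl

lemma rep_t₂ : C.rep C.t₂ = C.s₂ := by rw [rep, if_neg C.t₁_ne_t₂.symm, if_pos rfl]

lemma rep_of_ne {τ : Finset V} (h₁ : τ ≠ C.t₁) (h₂ : τ ≠ C.t₂) : C.rep τ = τ := by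
  rw [rep, if_neg h₁, if_neg h₂]

lemma KeptTri.rep_eq {C : AdmissibleEdge V} {τ : Finset V} (h : C.KeptTri τ) : C.rep τ = τ :=
  C.rep_of_ne h.ne_t₁ h.ne_t₂

lemma swap_rep : C.swap.rep = C.rep := by
  ext1 τ
  have := C.t₁_ne_t₂
  simp only [rep]
  split_ifs <;> first | rfl | simp_all [swap]

lemma keptTri_rep {τ : Finset V} (hτ : τ ∈ C.K) (hτ3 : τ.card = 3) : C.KeptTri (C.rep τ) := by
  by_cases h₁ : τ = C.t₁
  · rw [h₁, C.rep_t₁]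
    exact C.keptTri_s₁
  by_cases h₂ : τ = C.t₂
  · rw [h₂, C.rep_t₂]
    exact C.swap.keptTri_s₁.swap
  have hτ : C.KeptTri τ := ⟨hτ, hτ3, h₁, h₂⟩
  rwa [hτ.rep_eq]

lemma KeptTri.keptEdge_of_subset {C : AdmissibleEdge V} {σ τ d : Finset V} (hσ : C.KeptTri σ)
    (hτ : C.KeptTri τ) (hστ : σ ≠ τ) (hd : d ∈ C.K) (hd2 : d.card = 2) (hdσ : d ⊆ σ)
    (hdτ : d ⊆ τ) : C.KeptEdge d := by
  refine ⟨hd, hd2, fun h => ?_, fun h => ?_, fun h => ?_⟩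
  · exact (C.eq_t₁_or_t₂ σ hσ.mem hσ.card (h ▸ hdσ)).elim hσ.ne_t₁ hσ.ne_t₂
  · subst h
    exact hστ (((C.eq_t₁_or_s₁ hσ.mem hσ.card hdσ).resolve_left hσ.ne_t₁).trans
      ((C.eq_t₁_or_s₁ hτ.mem hτ.card hdτ).resolve_left hτ.ne_t₁).symm)
  · subst h
    exact hστ (((C.swap.eq_t₁_or_s₁ hσ.mem hσ.card hdσ).resolve_left hσ.ne_t₂).trans
      ((C.swap.eq_t₁_or_s₁ hτ.mem hτ.card hdτ).resolve_left hτ.ne_t₂).symm)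

lemma reachable_xi_of_adj_t₁ {e c y : Finset V} (he : C.KeptEdge e)
    (hc : ∀ d, C.prec c d → C.prec e d) (h : (C.dual c).Adj C.t₁ y) (hy : C.KeptTri y) :
    (C.dual' e).Reachable (xi C.u C.v C.s₁) (xi C.u C.v y) := by
  obtain ⟨-, -, -, -, -, d, -, hd2, hdt, hdy, hcd⟩ := h
  rcases C.eq_of_subset_t₁ hdt hd2 with rfl | rfl | rfl
  · exact ((C.eq_t₁_or_t₂ y hy.mem hy.card hdy).elim hy.ne_t₁ hy.ne_t₂).elim
  · by_cases hys : y = C.s₁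
    · rw [hys]
    refine (C.adj_xi he C.keptEdge_e₁ hy C.keptTri_s₁ hys (image_subset_image hdy) ?_
      (hc _ hcd)).reachable.symm
    rw [C.xi_e₁, ← C.xi_e₁']
    exact image_subset_image C.e₁'_subset_s₁
  · rw [(C.eq_t₁_or_s₁ hy.mem hy.card hdy).resolve_left hy.ne_t₁]

lemma reachable_xi_rep_of_adj_t₁ {e c y : Finset V} (he : C.KeptEdge e)
    (hc : ∀ d, C.prec c d → C.prec e d)
    (hbr : C.prec c {C.u, C.v} → (C.dual' e).Reachable (xi C.u C.v C.s₁) (xi C.u C.v C.s₂))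
    (h : (C.dual c).Adj C.t₁ y) :
    (C.dual' e).Reachable (xi C.u C.v (C.rep C.t₁)) (xi C.u C.v (C.rep y)) := by
  rw [C.rep_t₁]
  by_cases hy₂ : y = C.t₂
  · subst hy₂
    obtain ⟨-, -, -, -, -, d, -, hd2, hdt₁, hdt₂, hcd⟩ := h
    rw [C.rep_t₂]
    exact hbr (C.eq_uv_of_subset_t₁_t₂ hdt₁ hdt₂ hd2 ▸ hcd)
  · have hy : C.KeptTri y := ⟨h.2.2.1, h.2.2.2.2.1, h.1.symm, hy₂⟩
    rw [hy.rep_eq]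
    exact C.reachable_xi_of_adj_t₁ he hc h hy

/-- `hbr` stands in for the arc between `t₁` and `t₂` across `{u, v}`, which the contraction
destroys. -/
lemma reachable_xi_rep_of_adj {e c x y : Finset V} (he : C.KeptEdge e)
    (hc : ∀ d, C.prec c d → C.prec e d)
    (hbr : C.prec c {C.u, C.v} → (C.dual' e).Reachable (xi C.u C.v C.s₁) (xi C.u C.v C.s₂))
    (h : (C.dual c).Adj x y) :
    (C.dual' e).Reachable (xi C.u C.v (C.rep x)) (xi C.u C.v (C.rep y)) := by
  have hbr' : C.prec c {C.u, C.v} →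
      (C.swap.dual' e).Reachable (xi C.u C.v C.swap.s₁) (xi C.u C.v C.swap.s₂) :=
    fun h => (hbr h).symm
  have hswap := fun {y} => C.swap_rep ▸ C.swap.reachable_xi_rep_of_adj_t₁ (y := y) he.swap hc hbr'
  by_cases hx₁ : x = C.t₁
  · subst hx₁
    exact C.reachable_xi_rep_of_adj_t₁ he hc hbr h
  by_cases hx₂ : x = C.t₂
  · subst hx₂
    exact hswap h
  by_cases hy₁ : y = C.t₁
  · subst hy₁
    exact (C.reachable_xi_rep_of_adj_t₁ he hc hbr h.symm).symm
  by_cases hy₂ : y = C.t₂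
  · subst hy₂
    exact (hswap h.symm).symm
  obtain ⟨hne, hxK, hyK, hx3, hy3, d, hd, hd2, hdx, hdy, hcd⟩ := h
  have hx : C.KeptTri x := ⟨hxK, hx3, hx₁, hx₂⟩
  have hy : C.KeptTri y := ⟨hyK, hy3, hy₁, hy₂⟩
  rw [hx.rep_eq, hy.rep_eq]
  exact (C.adj_xi he (hx.keptEdge_of_subset hy hne hd hd2 hdx hdy) hx hy hne
    (image_subset_image hdx) (image_subset_image hdy) (hc d hcd)).reachable

/-- Otherwise the component of `t₁` in `G^{≻{u,v}}` has `{u, v}` on its boundary, and its other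
boundary edges, all preceding `{u, v}`, would join `u` to `v` in `G_{≺{u,v}}`. -/
lemma reachable_t₁_t₂ : (C.dual {C.u, C.v}).Reachable C.t₁ C.t₂ := by
  by_contra hnr
  set S := {τ ∈ C.K | τ.card = 3 ∧ (C.dual {C.u, C.v}).Reachable C.t₁ τ}
  have hS : ∀ τ ∈ S, τ ∈ C.K ∧ τ.card = 3 := fun τ hτ =>
    ⟨(mem_filter.1 hτ).1, (mem_filter.1 hτ).2.1⟩
  have hSc : ∀ σ τ, (C.dual {C.u, C.v}).Adj σ τ → σ ∈ S → τ ∈ S := fun σ τ h hσ =>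
    mem_filter.2 ⟨h.2.2.1, h.2.2.2.2.1, (mem_filter.1 hσ).2.2.trans h.reachable⟩
  have hb : #{τ ∈ S | {C.u, C.v} ⊆ τ} = 1 := by
    rw [card_eq_one]
    refine ⟨C.t₁, eq_singleton_iff_unique_mem.2 ⟨?_, fun τ hτ => ?_⟩⟩
    · exact mem_filter.2 ⟨mem_filter.2 ⟨C.t₁_mem, C.card_t₁, .refl _⟩, C.uv_subset_t₁⟩
    · obtain ⟨hτS, huvτ⟩ := mem_filter.1 hτ
      obtain ⟨hτK, hτ3, hreach⟩ := mem_filter.1 hτS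
      exact (C.eq_t₁_or_t₂ τ hτK hτ3 huvτ).resolve_right fun h => hnr (h ▸ hreach)
  refine C.not_reachable (C.manifold.reachable_of_boundary C.isComplex hS C.u_ne_v hb
    fun x y hxy hd hne h1 => ⟨hxy, hd, ?_⟩)
  exact (C.prec_total _ hd _ C.uv_mem hne).resolve_right
    (C.manifold.not_prec_of_boundary hS hSc hd (card_pair hxy) h1)

lemma reachable_xi_rep_of_reachable {e c x y : Finset V} (he : C.KeptEdge e)
    (hc : ∀ d, C.prec c d → C.prec e d)
    (hbr : C.prec c {C.u, C.v} → (C.dual' e).Reachable (xi C.u C.v C.s₁) (xi C.u C.v C.s₂))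
    (h : (C.dual c).Reachable x y) :
    (C.dual' e).Reachable (xi C.u C.v (C.rep x)) (xi C.u C.v (C.rep y)) :=
  h.lift (fun τ => xi C.u C.v (C.rep τ)) fun _ _ => C.reachable_xi_rep_of_adj he hc hbr

lemma reachable_xi_s₁_s₂ {e : Finset V} (he : C.KeptEdge e) (h : C.prec e {C.u, C.v}) :
    (C.dual' e).Reachable (xi C.u C.v C.s₁) (xi C.u C.v C.s₂) := by
  simpa only [C.rep_t₁, C.rep_t₂] using C.reachable_xi_rep_of_reachable he
    (fun d hd => C.prec_trans _ _ _ h hd) (fun h => absurd h (C.prec_irrefl _)) C.reachable_t₁_t₂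

lemma reachable_xi_rep {e x y : Finset V} (he : C.KeptEdge e) (h : (C.dual e).Reachable x y) :
    (C.dual' e).Reachable (xi C.u C.v (C.rep x)) (xi C.u C.v (C.rep y)) :=
  C.reachable_xi_rep_of_reachable he (fun _ => id) (C.reachable_xi_s₁_s₂ he) h

/-! ### Greatest triangles -/

lemma exists_apex : ∃ a, a ≠ C.u ∧ a ≠ C.v ∧
    ((C.e₁ = {C.u, a} ∧ C.e₁' = {C.v, a}) ∨ (C.e₁ = {C.v, a} ∧ C.e₁' = {C.u, a})) := by
  obtain ⟨a, ha⟩ := card_eq_one.1 (show (C.t₁ \ {C.u, C.v}).card = 1 by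
    rw [card_sdiff_of_subset C.uv_subset_t₁, C.card_t₁, C.card_uv])
  have hat : a ∈ C.t₁ \ {C.u, C.v} := ha ▸ mem_singleton_self a
  simp only [mem_sdiff, mem_insert, mem_singleton, not_or] at hat
  obtain ⟨hat, hau, hav⟩ : a ∈ C.t₁ ∧ a ≠ C.u ∧ a ≠ C.v := hat
  have hedge : ∀ x, x ∈ C.t₁ → x ≠ a → ({x, a} : Finset V) = C.e₁ ∨ {x, a} = C.e₁' :=
    fun x hx hxa => by
      rcases C.eq_of_subset_t₁ (insert_subset hx (singleton_subset_iff.2 hat)) (card_pair hxa)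
        with h | h | h
      · exact absurd (h ▸ mem_insert_of_mem (mem_singleton_self a) : a ∈ ({C.u, C.v} : Finset V))
          (by simp [hau, hav])
      · exact Or.inl h
      · exact Or.inr h
  have hne : ({C.u, a} : Finset V) ≠ {C.v, a} := fun h => by
    have := h ▸ mem_insert_self C.u {a}
    simp [C.u_ne_v, hau.symm] at this
  obtain ⟨hu, hv⟩ := C.uv_subset_iff.1 C.uv_subset_t₁
  refine ⟨a, hau, hav, ?_⟩
  rcases hedge _ hu hau.symm with h₁ | h₁ <;> rcases hedge _ hv hav.symm with h₂ | h₂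
  · exact absurd (h₁.trans h₂.symm) hne
  · exact Or.inl ⟨h₁.symm, h₂.symm⟩
  · exact Or.inr ⟨h₂.symm, h₁.symm⟩
  · exact absurd (h₁.trans h₂.symm) hne

lemma uv_prec_e₁' : C.prec {C.u, C.v} C.e₁' := by
  refine (C.prec_total _ C.uv_mem _ C.e₁'_mem C.e₁'_ne_uv.symm).resolve_right fun h => ?_
  have h₁ := C.prec_trans _ _ _ C.prec_e₁ h
  have hadj : ∀ x y, x ≠ y → C.prec {x, y} {C.u, C.v} → {x, y} ∈ C.K →
      (vertGraph C.K C.prec {C.u, C.v}).Adj x y := fun x y hxy hp hK => ⟨hxy, hK, hp⟩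
  obtain ⟨a, hau, hav, ⟨he, he'⟩ | ⟨he, he'⟩⟩ := C.exists_apex
  · refine C.not_reachable ((hadj _ _ hau.symm (he ▸ h₁) (he ▸ C.e₁_mem)).reachable.trans
      (hadj _ _ hav (pair_comm C.v a ▸ he' ▸ h) (pair_comm C.v a ▸ he' ▸ C.e₁'_mem)).reachable)
  · refine C.not_reachable ((hadj _ _ hau.symm (he' ▸ h) (he' ▸ C.e₁'_mem)).reachable.trans
      (hadj _ _ hav (pair_comm C.v a ▸ he ▸ h₁) (pair_comm C.v a ▸ he ▸ C.e₁_mem)).reachable)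

lemma prec_e₁'_of_reachable {e σ : Finset V} (he : C.KeptEdge e) (heσ : e ⊆ σ)
    (h : (C.dual e).Reachable σ C.t₁) : C.prec e C.e₁' := by
  by_cases hσ₁ : σ = C.t₁
  · subst hσ₁
    rw [he.eq_e₁_of_subset heσ]
    exact C.prec_e₁
  obtain ⟨m, -, -, -, -, -, d, -, hd2, hdt, -, hed⟩ := h.symm.exists_adj (Ne.symm hσ₁)
  rcases C.eq_of_subset_t₁ hdt hd2 with rfl | rfl | rfl
  · exact C.prec_trans _ _ _ hed C.uv_prec_e₁'
  · exact C.prec_trans _ _ _ hed C.prec_e₁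
  · exact hed

/-- Were `t₁` the greatest triangle of a component of `G^{≻e}`, then `e ≺ e₁'`, so that
component also contains the component of `s₁` in `G^{≻e₁'}`, whose greatest triangle succeeds
`t₁` because `e₁'` is paired with `t₁`. -/
lemma greatest_ne_t₁ {e σ w : Finset V} (he : C.KeptEdge e) (heσ : e ⊆ σ)
    (hg : GreatestTri (C.dual e) C.prec σ w) : w ≠ C.t₁ := by
  rintro rfl
  have hpe := C.prec_e₁'_of_reachable he heσ hg.1
  obtain ⟨M, hM, hpM⟩ := C.paired₁.exists_prec C.manifold C.t₁_mem C.card_t₁ C.e₁'_subset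
    C.keptTri_s₁.mem C.keptTri_s₁.card C.e₁'_subset_s₁ C.keptTri_s₁.ne_t₁.symm (.refl _)
  have hσM : (C.dual e).Reachable σ M := hg.1.trans ((C.adj_t₁_s₁ hpe).reachable.trans
    (hM.mono (triGraph.mono C.prec_trans hpe)))
  rcases hg.2 M hσM with h | h
  · exact C.prec_irrefl _ (h ▸ hpM)
  · exact C.prec_asymm hpM h

lemma reachable_s₁_of_subset_t₁ {e : Finset V} (he : C.KeptEdge e) (h : e ⊆ C.t₁) :
    (C.dual e).Reachable C.t₁ C.s₁ := by
  rw [he.eq_e₁_of_subset h]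
  exact (C.adj_t₁_s₁ C.prec_e₁).reachable

lemma xi_e₁_subset_xi_s₁ : xi C.u C.v C.e₁ ⊆ xi C.u C.v C.s₁ := by
  rw [C.xi_e₁, ← C.xi_e₁']
  exact image_subset_image C.e₁'_subset_s₁

lemma reachable_rep_self {e σ : Finset V} (he : C.KeptEdge e) (heσ : e ⊆ σ) :
    (C.dual e).Reachable σ (C.rep σ) := by
  by_cases h₁ : σ = C.t₁
  · subst h₁
    rw [C.rep_t₁]
    exact C.reachable_s₁_of_subset_t₁ he heσ
  by_cases h₂ : σ = C.t₂
  · subst h₂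
    rw [C.rep_t₂]
    exact C.swap.reachable_s₁_of_subset_t₁ he.swap heσ
  rw [C.rep_of_ne h₁ h₂]

lemma xi_subset_xi_rep {e σ : Finset V} (he : C.KeptEdge e) (heσ : e ⊆ σ) :
    xi C.u C.v e ⊆ xi C.u C.v (C.rep σ) := by
  by_cases h₁ : σ = C.t₁
  · subst h₁
    rw [C.rep_t₁, he.eq_e₁_of_subset heσ]
    exact C.xi_e₁_subset_xi_s₁
  by_cases h₂ : σ = C.t₂
  · subst h₂
    rw [C.rep_t₂, he.swap.eq_e₁_of_subset heσ]
    exact C.swap.xi_e₁_subset_xi_s₁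
  rw [C.rep_of_ne h₁ h₂]
  exact image_subset_image heσ

lemma greatestTri_xi {e σ w : Finset V} (he : C.KeptEdge e) (hσ : σ ∈ C.K) (hσ3 : σ.card = 3)
    (heσ : e ⊆ σ) (hg : GreatestTri (C.dual e) C.prec σ w) :
    C.KeptTri w ∧ GreatestTri (C.dual' e) C.prec' (xi C.u C.v (C.rep σ)) (xi C.u C.v w) := by
  obtain ⟨hwK, hw3⟩ := triGraph.mem_of_reachable hg.1 hσ hσ3
  have hw : C.KeptTri w :=
    ⟨hwK, hw3, C.greatest_ne_t₁ he heσ hg, C.swap.greatest_ne_t₁ he.swap heσ hg⟩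
  refine ⟨hw, hw.rep_eq ▸ C.reachable_xi_rep he hg.1, fun x' hx' => ?_⟩
  have hrep := C.keptTri_rep hσ hσ3
  obtain ⟨hx'K, -⟩ := triGraph.mem_of_reachable hx' (mem_image_of_mem _ hrep.mem) hrep.card_xi
  have hr := C.reachable_pre he hx'
  rw [hrep.pre_xi] at hr
  rcases hg.2 _ ((C.reachable_rep_self he heσ).trans hr) with h | h
  · left
    rw [h, C.xi_pre hx'K]
  · exact Or.inr ((C.prec'_iff (C.minPre_pre hx'K) hw.minPre).2 h)

theorem pairedET_xi {e r : Finset V} (he : C.KeptEdge e) (hp : PairedET C.K C.prec e r) :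
    PairedET C.K' C.prec' (xi C.u C.v e) (xi C.u C.v r) := by
  obtain ⟨s, t, ws, wt, -, hs, ht, hs3, ht3, hes, het, -, -, hnr, hgs, hgt, hr⟩ := hp
  obtain ⟨hws, hgs'⟩ := C.greatestTri_xi he hs hs3 hes hgs
  obtain ⟨hwt, hgt'⟩ := C.greatestTri_xi he ht ht3 het hgt
  have hs' := C.keptTri_rep hs hs3
  have ht' := C.keptTri_rep ht ht3
  have hnr' : ¬ (C.dual' e).Reachable (xi C.u C.v (C.rep s)) (xi C.u C.v (C.rep t)) := fun h => by
    have h' := C.reachable_pre he h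
    rw [hs'.pre_xi, ht'.pre_xi] at h'
    exact hnr ((C.reachable_rep_self he hes).trans (h'.trans (C.reachable_rep_self he het).symm))
  refine ⟨_, _, _, _, fun h => hnr' (by rw [h]), mem_image_of_mem _ hs'.mem,
    mem_image_of_mem _ ht'.mem, hs'.card_xi, ht'.card_xi, C.xi_subset_xi_rep he hes,
    C.xi_subset_xi_rep he het, mem_image_of_mem _ he.mem, he.card_xi, hnr', hgs', hgt', ?_⟩
  rcases hr with ⟨h, rfl⟩ | ⟨h, rfl⟩
  · exact Or.inl ⟨(C.prec'_iff hws.minPre hwt.minPre).2 h, rfl⟩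
  · exact Or.inr ⟨(C.prec'_iff hwt.minPre hws.minPre).2 h, rfl⟩

end AdmissibleEdge

theorem contraction_preserves_edge_triangle_pairs_general
    (K : Finset (Finset V)) (h : Finset V → ℝ) (u v : V)
    (prec : Finset V → Finset V → Prop) (t₁ t₂ e₁ e₁' e₂ e₂' : Finset V)
    (hK : IsComplex K) (hman : ClosedTwoManifold K) (hh : IsHeight K h)
    (hprec : PrecOK K h prec)
    (hne : u ≠ v)
    -- `t₁` and `t₂` are the two triangles of `K` containing `{u,v}`
    (ht1 : t₁ ∈ K) (ht1c : t₁.card = 3) (ht1uv : ({u, v} : Finset V) ⊆ t₁)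
    (ht2 : t₂ ∈ K) (ht2c : t₂.card = 3) (ht2uv : ({u, v} : Finset V) ⊆ t₂)
    (ht12 : t₁ ≠ t₂)
    (honly : ∀ t ∈ K, t.card = 3 → ({u, v} : Finset V) ⊆ t → t = t₁ ∨ t = t₂)
    -- `e₁ ≺ e₁'` are the two edges of `t₁` other than `{u,v}`,
    -- and `e₂ ≺ e₂'` those of `t₂`
    (he1 : e₁ ⊆ t₁) (he1c : e₁.card = 2) (he1uv : e₁ ≠ {u, v})
    (he1' : e₁' ⊆ t₁) (he1'c : e₁'.card = 2) (he1'uv : e₁' ≠ {u, v})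
    (hp1 : prec e₁ e₁')
    (he2 : e₂ ⊆ t₂) (he2c : e₂.card = 2) (he2uv : e₂ ≠ {u, v})
    (he2' : e₂' ⊆ t₂) (he2'c : e₂'.card = 2) (he2'uv : e₂' ≠ {u, v})
    (hp2 : prec e₂ e₂')
    -- admissibility of `{u,v}`
    (hlink : LinkCond K u v)
    (hpairuv : PairedVE K prec v {u, v})
    (hpair1 : PairedET K prec e₁' t₁)
    (hpair2 : PairedET K prec e₂' t₂)
    -- the edge `e` and its persistence partner `r`
    (e r : Finset V)
    (hee : e ≠ {u, v}) (hee1 : e ≠ e₁') (hee2 : e ≠ e₂')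
    (hpair : PairedET K prec e r) :
    PairedET (K.image (xi u v)) (precInd K u v prec) (xi u v e) (xi u v r) := by
  let C : AdmissibleEdge V :=
    ⟨K, prec, u, v, t₁, t₂, e₁, e₁', e₂, e₂', hK, hman, hprec.1, hprec.2.1, hprec.2.2.1,
      fun _ hσ _ hτ => hprec.prec_of_ssubset hh hσ hτ, hne, ht1, ht1c, ht1uv, ht2, ht2c, ht2uv,
      ht12, honly, he1, he1c, he1uv, he1', he1'c, he1'uv, hp1, he2, he2c, he2uv, he2', he2'c,
      he2'uv, hp2, hlink, hpairuv.not_reachable, hpair1, hpair2⟩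
  have he : C.KeptEdge e := by
    obtain ⟨-, -, -, -, -, -, -, -, -, -, -, heK, he2, -⟩ := hpair
    exact ⟨heK, he2, hee, hee1, hee2⟩
  exact C.pairedET_xi he hpair

/-- if `{u,v}` is admissible and the edge `e ∉ {{u,v}, e₁′, e₂′}` is paired
with the triangle `r` in `K`, then `ξ(e)` is paired with `ξ(r)` in the contracted complex
`K′` with respect to the induced order. -/
theorem contraction_preserves_edge_triangle_pairs
    (K : Finset (Finset V)) (h : Finset V → ℝ) (u v : V)
    (prec : Finset V → Finset V → Prop) (t₁ t₂ e₁ e₁' e₂ e₂' : Finset V)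
    (hK : IsComplex K) (hman : ClosedTwoManifold K) (hh : IsHeight K h)
    (hprec : PrecOK K h prec)
    (huv : ({u, v} : Finset V) ∈ K) (hne : u ≠ v) (huvprec : prec {u} {v})
    -- `t₁` and `t₂` are the two triangles of `K` containing `{u,v}`
    (ht1 : t₁ ∈ K) (ht1c : t₁.card = 3) (ht1uv : ({u, v} : Finset V) ⊆ t₁)
    (ht2 : t₂ ∈ K) (ht2c : t₂.card = 3) (ht2uv : ({u, v} : Finset V) ⊆ t₂)
    (ht12 : t₁ ≠ t₂)
    (honly : ∀ t ∈ K, t.card = 3 → ({u, v} : Finset V) ⊆ t → t = t₁ ∨ t = t₂)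
    -- `e₁ ≺ e₁'` are the two edges of `t₁` other than `{u,v}`,
    -- and `e₂ ≺ e₂'` those of `t₂`
    (he1 : e₁ ⊆ t₁) (he1c : e₁.card = 2) (he1uv : e₁ ≠ {u, v})
    (he1' : e₁' ⊆ t₁) (he1'c : e₁'.card = 2) (he1'uv : e₁' ≠ {u, v})
    (he11' : e₁ ≠ e₁') (hp1 : prec e₁ e₁')
    (he2 : e₂ ⊆ t₂) (he2c : e₂.card = 2) (he2uv : e₂ ≠ {u, v})
    (he2' : e₂' ⊆ t₂) (he2'c : e₂'.card = 2) (he2'uv : e₂' ≠ {u, v})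
    (he22' : e₂ ≠ e₂') (hp2 : prec e₂ e₂')
    -- admissibility of `{u,v}`
    (hlink : LinkCond K u v)
    (hpairuv : PairedVE K prec v {u, v})
    (hpair1 : PairedET K prec e₁' t₁)
    (hpair2 : PairedET K prec e₂' t₂)
    -- the edge `e` and its persistence partner `r`
    (e r : Finset V)
    (hee : e ≠ {u, v}) (hee1 : e ≠ e₁') (hee2 : e ≠ e₂')
    (hpair : PairedET K prec e r) :
    PairedET (K.image (xi u v)) (precInd K u v prec) (xi u v e) (xi u v r) :=
  contraction_preserves_edge_triangle_pairs_general K h u v prec t₁ t₂ e₁ e₁' e₂ e₂' hK hman hh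
    hprec hne ht1 ht1c ht1uv ht2 ht2c ht2uv ht12 honly he1 he1c he1uv he1' he1'c he1'uv hp1 he2 he2c
    he2uv he2' he2'c he2'uv hp2 hlink hpairuv hpair1 hpair2 e r hee hee1 hee2 hpair
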